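/- arXiv:1901.02477 — 2 statements merged into one kernel-verified Lean document; each statement's English description precedes it below -/
import Mathlib

section
/- The Gaussian mechanism that adds N(0, σ²) noise to a real-valued function f with global sensitivity Δ satisfies (ε, δ)-differential privacy whenever σ ≥ Δ·√(2·ln(1.25/δ))/ε, for any ε ∈ (0, 1) and δ ∈ (0, 1). -/
/-!
Write `a = μ - μ'`. The privacy loss `log (p_μ x / p_μ' x) = ((x - μ')² - (x - μ)²) / 2σ²` of
two Gaussian densities exceeds `ε` only on the half-line `a (x - μ) > σ²ε - a²/2`. Off it the
density ratio is at most `e^ε`; on it the mass is a Gaussian tail `P(Z ≥ t)` with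
`t = (σ²ε - a²/2) / |a|`. For `t ≥ 0`, comparing the density with the one centred at `t` gives
`P(Z ≥ t) ≤ e^{-t²/2σ²} / 2`, and the calibration of `σ` makes this at most `δ`. A negative `t`
forces `log (1.25/δ) < 1/4`, i.e. `δ > 15/16`, while `P(Z ≥ t) ≤ 1/2 + |t| / √(2πσ²) ≤ 5/6`.
-/

open MeasureTheory ProbabilityTheory Real Set
open scoped ENNReal NNReal

section WithDensity

variable {α : Type*} [MeasurableSpace α] (ν : Measure α) [SFinite ν] {p q : α → ℝ≥0∞}

lemma withDensity_apply_le_mul_of_forall_le (hq : Measurable q) {c : ℝ≥0∞} {s : Set α}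
    (h : ∀ x ∈ s, p x ≤ c * q x) : ν.withDensity p s ≤ c * ν.withDensity q s := by
  rw [withDensity_apply' _ s, withDensity_apply' _ s, ← lintegral_const_mul c hq]
  exact setLIntegral_mono (hq.const_mul c) h

lemma withDensity_apply_le_mul_add (hq : Measurable q) (c : ℝ≥0∞) (s : Set α) :
    ν.withDensity p s ≤ c * ν.withDensity q s + ν.withDensity p {x | c * q x < p x} := by
  set B := {x | c * q x < p x}
  calc ν.withDensity p s ≤ ν.withDensity p (s \ B) + ν.withDensity p B :=
        (measure_mono (by rw [sdiff_union_self]; exact subset_union_left)).trans (measure_union_le _ _)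
    _ ≤ c * ν.withDensity q s + ν.withDensity p B := by
        gcongr
        calc ν.withDensity p (s \ B) ≤ c * ν.withDensity q (s \ B) :=
              withDensity_apply_le_mul_of_forall_le ν hq fun x hx => not_lt.1 hx.2
          _ ≤ c * ν.withDensity q s := by gcongr; exact sdiff_subset

end WithDensity

section Gaussian

variable {v : ℝ≥0}

lemma gaussianReal_Iic_sub_eq_Ici_add (μ τ : ℝ) :
    gaussianReal μ v (Iic (μ - τ)) = gaussianReal μ v (Ici (μ + τ)) := by
  have hreflect : (gaussianReal μ v).map (2 * μ - ·) = gaussianReal μ v := by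
    rw [gaussianReal_map_const_sub]; ring_nf
  rw [← hreflect, Measure.map_apply (by fun_prop) measurableSet_Ici]
  congr 1
  ext x
  simp only [mem_Iic, mem_preimage, mem_Ici]
  constructor <;> intro h <;> linarith

lemma gaussianReal_Ici_self (hv : v ≠ 0) (μ : ℝ) : gaussianReal μ v (Ici μ) = 2⁻¹ := by
  have := nullSingletonClass_gaussianReal (μ := μ) hv
  have h := measure_union_add_inter (μ := gaussianReal μ v) (Iic μ) (measurableSet_Ici (a := μ))
  have hsymm := gaussianReal_Iic_sub_eq_Ici_add (v := v) μ 0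
  rw [sub_zero, add_zero] at hsymm
  rw [Iic_union_Ici, Iic_inter_Ici, Icc_self, measure_univ, measure_singleton, add_zero, hsymm,
    ← two_mul] at h
  exact ENNReal.eq_inv_of_mul_eq_one_left (by rw [mul_comm]; exact h.symm)

lemma gaussianPDFReal_le_exp_mul_gaussianPDFReal_add {μ τ x : ℝ} (hτ : 0 ≤ τ) (hx : μ + τ ≤ x) :
    gaussianPDFReal μ v x ≤ exp (-τ ^ 2 / (2 * v)) * gaussianPDFReal (μ + τ) v x := by
  rw [gaussianPDFReal, gaussianPDFReal, mul_left_comm, ← exp_add, ← add_div]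
  gcongr
  nlinarith

lemma gaussianPDFReal_le_inv_sqrt (μ x : ℝ) : gaussianPDFReal μ v x ≤ (√(2 * π * v))⁻¹ :=
  mul_le_of_le_one_right (by positivity)
    (exp_le_one_iff.2 (div_nonpos_of_nonpos_of_nonneg (neg_nonpos.2 (sq_nonneg _)) (by positivity)))

lemma gaussianReal_Ici_add_le_of_nonneg (hv : v ≠ 0) (μ : ℝ) {τ : ℝ} (hτ : 0 ≤ τ) :
    gaussianReal μ v (Ici (μ + τ)) ≤ ENNReal.ofReal (exp (-τ ^ 2 / (2 * v)) / 2) := by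
  calc gaussianReal μ v (Ici (μ + τ))
      ≤ ENNReal.ofReal (exp (-τ ^ 2 / (2 * v))) * gaussianReal (μ + τ) v (Ici (μ + τ)) := by
        rw [gaussianReal_of_var_ne_zero _ hv, gaussianReal_of_var_ne_zero _ hv]
        refine withDensity_apply_le_mul_of_forall_le _ (measurable_gaussianPDF _ _) fun x hx => ?_
        rw [gaussianPDF, gaussianPDF, ← ENNReal.ofReal_mul (exp_nonneg _)]
        exact ENNReal.ofReal_le_ofReal (gaussianPDFReal_le_exp_mul_gaussianPDFReal_add hτ hx)
    _ = ENNReal.ofReal (exp (-τ ^ 2 / (2 * v)) / 2) := by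
        rw [gaussianReal_Ici_self hv, ENNReal.ofReal_div_of_pos two_pos, ENNReal.ofReal_ofNat]
        exact (div_eq_mul_inv _ _).symm

lemma gaussianReal_Ici_add_le_of_nonpos (hv : v ≠ 0) (μ : ℝ) {τ : ℝ} (hτ : τ ≤ 0) :
    gaussianReal μ v (Ici (μ + τ)) ≤ ENNReal.ofReal (1 / 2 + -τ / √(2 * π * v)) := by
  calc gaussianReal μ v (Ici (μ + τ))
      ≤ gaussianReal μ v (Ico (μ + τ) μ) + gaussianReal μ v (Ici μ) := by
        rw [← Ico_union_Ici_eq_Ici (by linarith : μ + τ ≤ μ)]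
        exact measure_union_le _ _
    _ ≤ ENNReal.ofReal (√(2 * π * v))⁻¹ * volume (Ico (μ + τ) μ) + 2⁻¹ := by
        rw [gaussianReal_Ici_self hv, gaussianReal_apply _ hv, ← setLIntegral_const]
        gcongr with x
        exact ENNReal.ofReal_le_ofReal (gaussianPDFReal_le_inv_sqrt μ x)
    _ = ENNReal.ofReal (1 / 2 + -τ / √(2 * π * v)) := by
        rw [volume_Ico, ← ENNReal.ofReal_mul (by positivity),
          show (√(2 * π * v))⁻¹ * (μ - (μ + τ)) = -τ / √(2 * π * v) by ring, add_comm,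
          ENNReal.ofReal_add (by norm_num) (div_nonneg (by linarith) (sqrt_nonneg _)), one_div,
          ENNReal.ofReal_inv_of_pos two_pos, ENNReal.ofReal_ofNat]

lemma gaussianReal_setOf_le_mul_sub (μ : ℝ) {a : ℝ} (ha : a ≠ 0) (b : ℝ) :
    gaussianReal μ v {x | b ≤ a * (x - μ)} = gaussianReal μ v (Ici (μ + b / |a|)) := by
  rcases ha.lt_or_gt with ha | ha
  · rw [abs_of_neg ha, ← gaussianReal_Iic_sub_eq_Ici_add]
    congr 1
    ext x
    rw [mem_ofPred_eq, mem_Iic, div_neg, sub_neg_eq_add, ← sub_le_iff_le_add',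
      le_div_iff_of_neg ha, mul_comm]
  · rw [abs_of_pos ha]
    congr 1
    ext x
    rw [mem_ofPred_eq, mem_Ici, ← le_sub_iff_add_le', div_le_iff₀' ha]

lemma exp_mul_gaussianPDFReal_lt_iff (hv : v ≠ 0) (μ μ' ε x : ℝ) :
    exp ε * gaussianPDFReal μ' v x < gaussianPDFReal μ v x ↔
      2 * v * ε < (x - μ') ^ 2 - (x - μ) ^ 2 := by
  have hv' : (0 : ℝ) < 2 * v := by positivity
  rw [gaussianPDFReal, gaussianPDFReal, mul_left_comm, ← exp_add,
    mul_lt_mul_iff_right₀ (by positivity), exp_lt_exp, ← sub_pos, ← sub_pos (b := 2 * (v : ℝ) * ε)]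
  have hloss : -(x - μ) ^ 2 / (2 * v) - (ε + -(x - μ') ^ 2 / (2 * v)) =
      ((x - μ') ^ 2 - (x - μ) ^ 2 - 2 * v * ε) / (2 * v) := by
    field_simp
    ring
  rw [hloss, div_pos_iff_of_pos_right hv']

lemma gaussianReal_le_exp_mul_add (hv : v ≠ 0) (μ μ' ε : ℝ) (s : Set ℝ) :
    gaussianReal μ v s ≤ ENNReal.ofReal (exp ε) * gaussianReal μ' v s +
      gaussianReal μ v {x | 2 * v * ε < (x - μ') ^ 2 - (x - μ) ^ 2} := by
  rw [gaussianReal_of_var_ne_zero _ hv, gaussianReal_of_var_ne_zero _ hv]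
  convert withDensity_apply_le_mul_add volume (measurable_gaussianPDF μ' v) _ s using 4
  ext x
  rw [gaussianPDF, gaussianPDF, ← ENNReal.ofReal_mul (exp_nonneg _),
    ENNReal.ofReal_lt_ofReal_iff (gaussianPDFReal_pos _ _ _ hv), exp_mul_gaussianPDFReal_lt_iff hv]

end Gaussian

section Calibration

variable {A σ ε δ t : ℝ}

lemma half_exp_neg_sq_div_le (hA : 0 < A) (hσ : 0 < σ) (hε1 : ε < 1) (hδ : 0 < δ)
    (hAσ : A ^ 2 * (2 * log (1.25 / δ)) ≤ (ε * σ) ^ 2) (ht : A * t = σ ^ 2 * ε - A ^ 2 / 2) :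
    exp (-t ^ 2 / (2 * σ ^ 2)) / 2 ≤ δ := by
  set L := log (1.25 / δ)
  have ht2 : σ ^ 2 * (2 * L - ε) ≤ t ^ 2 := by
    refine le_of_mul_le_mul_left ?_ (by positivity : 0 < A ^ 2)
    have hsq : A ^ 2 * t ^ 2 = (σ ^ 2 * ε - A ^ 2 / 2) ^ 2 := by rw [← ht]; ring
    nlinarith [mul_le_mul_of_nonneg_left hAσ (sq_nonneg σ), sq_nonneg (A ^ 2)]
  have hexp_half : exp (ε / 2) ≤ 5 / 3 := by
    have hsq : exp (ε / 2) ^ 2 = exp ε := by rw [sq, ← exp_add, add_halves]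
    have : exp ε < exp 1 := exp_lt_exp.2 hε1
    nlinarith [exp_pos (ε / 2), exp_one_lt_d9]
  have hexp_L : exp (-L) = δ / 1.25 := by rw [exp_neg, exp_log (by positivity), inv_div]
  calc exp (-t ^ 2 / (2 * σ ^ 2)) / 2 ≤ exp (ε / 2 + -L) / 2 := by
        gcongr
        rw [div_le_iff₀ (by positivity)]
        nlinarith
    _ = exp (ε / 2) * (δ / 1.25) / 2 := by rw [exp_add, hexp_L]
    _ ≤ 5 / 3 * (δ / 1.25) / 2 := by gcongr
    _ ≤ δ := by norm_num; linarith

lemma half_add_neg_div_sqrt_le (hA : 0 < A) (hσ : 0 < σ) (hε : 0 < ε) (hε1 : ε < 1) (hδ : 0 < δ)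
    (hδ1 : δ < 1) (hAσ : A ^ 2 * (2 * log (1.25 / δ)) ≤ (ε * σ) ^ 2)
    (ht : A * t = σ ^ 2 * ε - A ^ 2 / 2) (ht0 : t < 0) :
    1 / 2 + -t / √(2 * π * σ ^ 2) ≤ δ := by
  set L := log (1.25 / δ)
  have hL_ge : 1 / 5 ≤ L := by
    have h1 : 1 - δ / 1.25 ≤ L := by
      simpa only [inv_div] using one_sub_inv_le_log_of_pos (x := 1.25 / δ) (by positivity)
    have h2 : δ / 1.25 ≤ 4 / 5 := by rw [div_le_iff₀ (by norm_num)]; linarith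
    linarith
  have hL_lt : L < 1 / 4 := by
    have h1 : σ ^ 2 * ε < A ^ 2 / 2 := by nlinarith
    have h2 : A ^ 2 * (2 * L) < A ^ 2 * (1 / 2) := by nlinarith
    linarith [lt_of_mul_lt_mul_left h2 (sq_nonneg A)]
  have hδ_gt : 15 / 16 < δ := by
    have h1 : 3 / 4 ≤ exp (-1 / 4) := by linarith [add_one_le_exp (-1 / 4 : ℝ)]
    have h2 : exp (1 / 4) * exp (-1 / 4) = 1 := by rw [← exp_add]; norm_num
    have h3 : 1.25 / δ < exp (1 / 4) := by
      rw [← exp_log (by positivity : (0 : ℝ) < 1.25 / δ)]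
      exact exp_lt_exp.2 hL_lt
    rw [div_lt_iff₀ hδ] at h3
    nlinarith [exp_pos (1 / 4)]
  have hneg_t : -t ≤ A / 2 := le_of_mul_le_mul_left (by nlinarith) hA
  have hsqrt : 5 / 2 * σ ≤ √(2 * π * σ ^ 2) := by
    rw [le_sqrt' (by positivity)]
    nlinarith [pi_gt_d2]
  have hAσ' : 3 * A ≤ 5 * σ := by
    have hεσ : (ε * σ) ^ 2 ≤ σ ^ 2 := by
      rw [mul_pow]
      exact mul_le_of_le_one_left (sq_nonneg _) (by nlinarith)
    have h1 : A ^ 2 * (2 / 5) ≤ σ ^ 2 := by nlinarith [mul_le_mul_of_nonneg_left hL_ge (sq_nonneg A)]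
    nlinarith
  calc 1 / 2 + -t / √(2 * π * σ ^ 2) ≤ 1 / 2 + A / 2 / (5 / 2 * σ) := by gcongr
    _ ≤ 1 / 2 + 1 / 3 := by
        have : A / 2 / (5 / 2 * σ) ≤ 1 / 3 := by
          rw [div_div, div_le_iff₀ (by positivity)]
          linarith
        linarith
    _ ≤ δ := by linarith

end Calibration

lemma gaussianReal_privacyLoss_gt_le {μ μ' ε δ : ℝ} {σ : ℝ≥0} (hσ : σ ≠ 0) (hε : 0 < ε)
    (hε1 : ε < 1) (hδ : 0 < δ) (hδ1 : δ < 1)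
    (hsens : |μ - μ'| * √(2 * log (1.25 / δ)) ≤ ε * σ) :
    gaussianReal μ (σ ^ 2) {x | 2 * ((σ ^ 2 : ℝ≥0) : ℝ) * ε < (x - μ') ^ 2 - (x - μ) ^ 2} ≤
      ENNReal.ofReal δ := by
  have hv : σ ^ 2 ≠ 0 := pow_ne_zero 2 hσ
  have hσ_pos : (0 : ℝ) < σ := by positivity
  set a := μ - μ'
  have hloss (x : ℝ) : (x - μ') ^ 2 - (x - μ) ^ 2 = 2 * a * (x - μ) + a ^ 2 := by ring
  rcases eq_or_ne a 0 with ha | ha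
  · have hnot (x : ℝ) : ¬ 2 * (σ : ℝ) ^ 2 * ε < (x - μ') ^ 2 - (x - μ) ^ 2 := by
      rw [hloss, ha, not_lt]
      ring_nf
      positivity
    simp [hnot]
  have hA : 0 < |a| := abs_pos.2 ha
  have hAσ : |a| ^ 2 * (2 * log (1.25 / δ)) ≤ (ε * σ) ^ 2 := by
    have hL : 0 < log (1.25 / δ) := log_pos (by rw [lt_div_iff₀ hδ]; linarith)
    rw [← sq_sqrt (by positivity : 0 ≤ 2 * log (1.25 / δ)), ← mul_pow]
    exact pow_le_pow_left₀ (by positivity) hsens 2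
  set t := ((σ : ℝ) ^ 2 * ε - a ^ 2 / 2) / |a|
  have ht : |a| * t = σ ^ 2 * ε - |a| ^ 2 / 2 := by
    rw [sq_abs]
    exact mul_div_cancel₀ _ hA.ne'
  calc gaussianReal μ (σ ^ 2) {x | 2 * ((σ ^ 2 : ℝ≥0) : ℝ) * ε < (x - μ') ^ 2 - (x - μ) ^ 2}
      ≤ gaussianReal μ (σ ^ 2) {x | (σ : ℝ) ^ 2 * ε - a ^ 2 / 2 ≤ a * (x - μ)} := by
        refine measure_mono fun x hx => ?_
        rw [mem_ofPred_eq, hloss] at hx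
        push_cast at hx
        rw [mem_ofPred_eq]
        linarith
    _ = gaussianReal μ (σ ^ 2) (Ici (μ + t)) := gaussianReal_setOf_le_mul_sub μ ha _
    _ ≤ ENNReal.ofReal δ := by
        rcases le_or_gt 0 t with ht0 | ht0
        · refine (gaussianReal_Ici_add_le_of_nonneg hv μ ht0).trans (ENNReal.ofReal_le_ofReal ?_)
          rw [NNReal.coe_pow]
          exact half_exp_neg_sq_div_le hA hσ_pos hε1 hδ hAσ ht
        · refine (gaussianReal_Ici_add_le_of_nonpos hv μ ht0.le).trans (ENNReal.ofReal_le_ofReal ?_)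
          rw [NNReal.coe_pow]
          exact half_add_neg_div_sqrt_le hA hσ_pos hε hε1 hδ hδ1 hAσ ht ht0

/-- The Gaussian mechanism `d ↦ f d + N(0, σ²)` for a query `f` of global
sensitivity Δ is (ε, δ)-differentially private whenever
σ ≥ Δ·√(2·ln(1.25/δ))/ε, for ε, δ ∈ (0, 1). -/
theorem gaussian_mechanism_dp
    {D : Type*} (adj : D → D → Prop)
    (f : D → ℝ) (Δ : ℝ) (hΔ : 0 < Δ)
    (hsens : ∀ d d', adj d d' → |f d - f d'| ≤ Δ)
    (ε δ : ℝ) (hε : ε ∈ Set.Ioo (0:ℝ) 1) (hδ : δ ∈ Set.Ioo (0:ℝ) 1)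
    (σ : NNReal) (hσ : Δ * Real.sqrt (2 * Real.log (1.25 / δ)) / ε ≤ (σ : ℝ))
    (M : D → Measure ℝ)
    (hM : ∀ d, M d = gaussianReal (f d) (σ ^ 2)) :
    ∀ d d', adj d d' → ∀ S : Set ℝ, MeasurableSet S →
      M d S ≤ ENNReal.ofReal (Real.exp ε) * M d' S + ENNReal.ofReal δ := by
  obtain ⟨hε0, hε1⟩ := hε
  obtain ⟨hδ0, hδ1⟩ := hδ
  intro d d' hadj S _
  have hc : 0 < √(2 * log (1.25 / δ)) :=
    sqrt_pos.2 (mul_pos two_pos (log_pos (by rw [lt_div_iff₀ hδ0]; linarith)))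
  have hσ0 : σ ≠ 0 := (NNReal.coe_pos.1 ((div_pos (mul_pos hΔ hc) hε0).trans_le hσ)).ne'
  have hΔc : Δ * √(2 * log (1.25 / δ)) ≤ ε * σ := by
    rw [mul_comm ε]
    exact (div_le_iff₀ hε0).1 hσ
  have hsens' : |f d - f d'| * √(2 * log (1.25 / δ)) ≤ ε * σ :=
    (mul_le_mul_of_nonneg_right (hsens d d' hadj) hc.le).trans hΔc
  rw [hM, hM]
  exact (gaussianReal_le_exp_mul_add (pow_ne_zero 2 hσ0) _ _ ε S).trans
    (add_le_add_right (gaussianReal_privacyLoss_gt_le hσ0 hε0 hε1 hδ0 hδ1 hsens') _)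
end

section
/- If a single iteration of a mechanism applied to a uniformly sampled lot of size L from a dataset of size N is (ε, δ)-differentially private with respect to the lot, and each record is included in the lot independently with probability q = L/N, then the iteration is (log(1 + q(e^ε − 1)), qδ)-differentially private with respect to the full dataset; in particular, for ε ≤ 1 it is (2qε, qδ)-differentially private. -/
/-!
Conditioning on whether the extra record `x` is sampled, the subsampled mechanism on
`insert x D` is the mixture `(1 - q) μ + q ν`, where `μ` is the subsampled mechanism on `D` and
`ν` runs `M` on the sampled lot with `x` added. Averaging the lotwise guarantee over the lots gives
`ν ≤ e^ε μ + δ` and `μ ≤ e^ε ν + δ`. The first yields `(1 - q) μ + q ν ≤ (1 + q (e^ε - 1)) μ + q δ`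
at once; the second yields the reverse bound after multiplying through by `e^ε`, the slack being
`q (1 - q) (e^ε - 1)²`. For `ε ≤ 1`, `e^ε - 1 ≤ 2ε` and `1 + t ≤ e^t` give the simplified bound.
-/

open MeasureTheory ENNReal

noncomputable def subsampleProb {X : Type*} (q : ℝ) (D A : Finset X) : ℝ :=
  q ^ A.card * (1 - q) ^ (D.card - A.card)

noncomputable def subsample {X Ω : Type*} [MeasurableSpace Ω] (q : ℝ) (M : Finset X → Measure Ω)
    (D : Finset X) : Measure Ω :=
  ∑ A ∈ D.powerset, ENNReal.ofReal (subsampleProb q D A) • M A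

section subsampleProb

variable {X : Type*} {q : ℝ} {D A : Finset X} {x : X}

lemma subsampleProb_nonneg (hq₀ : 0 ≤ q) (hq₁ : q ≤ 1) : 0 ≤ subsampleProb q D A := by
  unfold subsampleProb
  have : 0 ≤ 1 - q := by linarith
  positivity

lemma sum_subsampleProb (q : ℝ) (D : Finset X) : ∑ A ∈ D.powerset, subsampleProb q D A = 1 := by
  simp only [subsampleProb, Finset.sum_pow_mul_eq_add_pow, add_sub_cancel, one_pow]

lemma sum_ofReal_subsampleProb (hq₀ : 0 ≤ q) (hq₁ : q ≤ 1) (D : Finset X) :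
    ∑ A ∈ D.powerset, ENNReal.ofReal (subsampleProb q D A) = 1 := by
  rw [← ENNReal.ofReal_sum_of_nonneg fun _ _ => subsampleProb_nonneg hq₀ hq₁,
    sum_subsampleProb, ENNReal.ofReal_one]

variable [DecidableEq X]

lemma subsampleProb_insert_left (hA : A ⊆ D) (hx : x ∉ D) :
    subsampleProb q (insert x D) A = (1 - q) * subsampleProb q D A := by
  rw [subsampleProb, subsampleProb, Finset.card_insert_of_notMem hx,
    Nat.succ_sub (Finset.card_le_card hA), pow_succ]
  ring

lemma subsampleProb_insert_insert (hA : A ⊆ D) (hx : x ∉ D) :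
    subsampleProb q (insert x D) (insert x A) = q * subsampleProb q D A := by
  rw [subsampleProb, subsampleProb, Finset.card_insert_of_notMem hx,
    Finset.card_insert_of_notMem fun h => hx (hA h), Nat.succ_sub_succ, pow_succ]
  ring

end subsampleProb

lemma Finset.sum_mul_le_mul_sum_add {ι : Type*} {s : Finset ι} {w f g : ι → ℝ≥0∞} {a δ : ℝ≥0∞}
    (hw : ∑ i ∈ s, w i = 1) (h : ∀ i ∈ s, f i ≤ a * g i + δ) :
    ∑ i ∈ s, w i * f i ≤ a * ∑ i ∈ s, w i * g i + δ :=
  calc ∑ i ∈ s, w i * f i ≤ ∑ i ∈ s, (a * (w i * g i) + w i * δ) :=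
        Finset.sum_le_sum fun i hi => by
          calc w i * f i ≤ w i * (a * g i + δ) := by gcongr; exact h i hi
            _ = a * (w i * g i) + w i * δ := by ring
    _ = a * ∑ i ∈ s, w i * g i + δ := by
        rw [Finset.sum_add_distrib, ← Finset.mul_sum, ← Finset.sum_mul, hw, one_mul]

section subsample

variable {X Ω : Type*} [MeasurableSpace Ω] {q : ℝ}

lemma subsample_apply (M : Finset X → Measure Ω) (D : Finset X) (S : Set Ω) :
    subsample q M D S = ∑ A ∈ D.powerset, ENNReal.ofReal (subsampleProb q D A) * M A S := by
  simp only [subsample, Measure.coe_finsetSum, Finset.sum_apply, Measure.smul_apply, smul_eq_mul]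

lemma subsample_apply_le_mul_add (hq₀ : 0 ≤ q) (hq₁ : q ≤ 1) {M₁ M₂ : Finset X → Measure Ω}
    {D : Finset X} {S : Set Ω} {a δ : ℝ≥0∞} (h : ∀ A ⊆ D, M₁ A S ≤ a * M₂ A S + δ) :
    subsample q M₁ D S ≤ a * subsample q M₂ D S + δ := by
  rw [subsample_apply, subsample_apply]
  exact Finset.sum_mul_le_mul_sum_add (sum_ofReal_subsampleProb hq₀ hq₁ D)
    fun A hA => h A (Finset.mem_powerset.mp hA)

lemma subsample_insert [DecidableEq X] (hq₀ : 0 ≤ q) (hq₁ : q ≤ 1) (M : Finset X → Measure Ω)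
    {D : Finset X} {x : X} (hx : x ∉ D) :
    subsample q M (insert x D) =
      ENNReal.ofReal (1 - q) • subsample q M D +
        ENNReal.ofReal q • subsample q (M ∘ insert x) D := by
  simp only [subsample, Finset.sum_powerset_insert hx, Finset.smul_sum, smul_smul,
    Function.comp_apply, ← ENNReal.ofReal_mul (sub_nonneg.mpr hq₁), ← ENNReal.ofReal_mul hq₀]
  congr 1 <;> refine Finset.sum_congr rfl fun A hA => ?_
  · rw [subsampleProb_insert_left (Finset.mem_powerset.mp hA) hx]
  · rw [subsampleProb_insert_insert (Finset.mem_powerset.mp hA) hx]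

end subsample

section amplification

variable {a q : ℝ} {V W δ : ℝ≥0∞}

lemma ofReal_one_sub_mul_add_ofReal_mul_le (ha : 0 ≤ a) (hq₀ : 0 ≤ q) (hq₁ : q ≤ 1)
    (hW : W ≤ ENNReal.ofReal a * V + δ) :
    ENNReal.ofReal (1 - q) * V + ENNReal.ofReal q * W ≤
      ENNReal.ofReal (1 + q * (a - 1)) * V + ENNReal.ofReal q * δ :=
  calc ENNReal.ofReal (1 - q) * V + ENNReal.ofReal q * W
      ≤ ENNReal.ofReal (1 - q) * V + ENNReal.ofReal q * (ENNReal.ofReal a * V + δ) := by gcongr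
    _ = (ENNReal.ofReal (1 - q) + ENNReal.ofReal q * ENNReal.ofReal a) * V
          + ENNReal.ofReal q * δ := by ring
    _ = ENNReal.ofReal (1 + q * (a - 1)) * V + ENNReal.ofReal q * δ := by
        rw [← ENNReal.ofReal_mul hq₀, ← ENNReal.ofReal_add (by linarith) (by positivity)]
        ring_nf

lemma le_ofReal_mul_ofReal_one_sub_mul_add_ofReal_mul (ha : 1 ≤ a) (hq₀ : 0 ≤ q) (hq₁ : q ≤ 1)
    (hV : V ≤ ENNReal.ofReal a * W + δ) :
    V ≤ ENNReal.ofReal (1 + q * (a - 1)) * (ENNReal.ofReal (1 - q) * V + ENNReal.ofReal q * W)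
      + ENNReal.ofReal q * δ := by
  set c := 1 + q * (a - 1)
  have hc₀ : 0 ≤ c := by nlinarith
  have hca : c ≤ a := by nlinarith
  have hgap : a ≤ a * c * (1 - q) + c * q := by
    have : 0 ≤ 1 - q := sub_nonneg.mpr hq₁
    rw [← sub_nonneg, show a * c * (1 - q) + c * q - a = q * (1 - q) * (a - 1) ^ 2 by ring]
    positivity
  have hA : ENNReal.ofReal a ≠ 0 := (ENNReal.ofReal_pos.mpr (by linarith)).ne'
  rw [← ENNReal.mul_le_mul_iff_right hA ENNReal.ofReal_ne_top]
  calc ENNReal.ofReal a * V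
      ≤ ENNReal.ofReal (a * c * (1 - q) + c * q) * V := by gcongr
    _ = ENNReal.ofReal a * (ENNReal.ofReal c * (ENNReal.ofReal (1 - q) * V))
          + ENNReal.ofReal c * (ENNReal.ofReal q * V) := by
        rw [ENNReal.ofReal_add (by positivity) (by positivity), ENNReal.ofReal_mul (by positivity),
          ENNReal.ofReal_mul (by positivity), ENNReal.ofReal_mul hc₀]
        ring
    _ ≤ ENNReal.ofReal a * (ENNReal.ofReal c * (ENNReal.ofReal (1 - q) * V))
          + ENNReal.ofReal c * (ENNReal.ofReal q * (ENNReal.ofReal a * W + δ)) := by gcongr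
    _ = ENNReal.ofReal a * (ENNReal.ofReal c * (ENNReal.ofReal (1 - q) * V + ENNReal.ofReal q * W))
          + ENNReal.ofReal c * ENNReal.ofReal q * δ := by ring
    _ ≤ ENNReal.ofReal a * (ENNReal.ofReal c * (ENNReal.ofReal (1 - q) * V + ENNReal.ofReal q * W))
          + ENNReal.ofReal a * ENNReal.ofReal q * δ := by gcongr
    _ = ENNReal.ofReal a * (ENNReal.ofReal c * (ENNReal.ofReal (1 - q) * V + ENNReal.ofReal q * W)
          + ENNReal.ofReal q * δ) := by ring

end amplification

lemma one_add_mul_exp_sub_one_le_exp_two_mul {q ε : ℝ} (hq : 0 ≤ q) (hε₀ : 0 ≤ ε) (hε₁ : ε ≤ 1) :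
    1 + q * (Real.exp ε - 1) ≤ Real.exp (2 * q * ε) := by
  have hexp : Real.exp ε - 1 ≤ 2 * ε := by
    have := Real.abs_exp_sub_one_le (x := ε) (by rwa [abs_of_nonneg hε₀])
    rw [abs_of_nonneg hε₀] at this
    exact (le_abs_self _).trans this
  calc 1 + q * (Real.exp ε - 1) ≤ 2 * q * ε + 1 := by nlinarith
    _ ≤ Real.exp (2 * q * ε) := Real.add_one_le_exp _

theorem privacy_amplification_by_subsampling_general
    {X : Type*} {Ω : Type*} [MeasurableSpace Ω] [DecidableEq X]
    (M : Finset X → Measure Ω)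
    (ε δ q : ℝ) (hε : 0 < ε)
    (hq0 : 0 < q) (hq1 : q < 1)
    -- M is (ε, δ)-DP with respect to add/remove-one adjacency of the lot
    (hM : ∀ (A : Finset X) (x : X), x ∉ A → ∀ S : Set Ω, MeasurableSet S →
      M (insert x A) S ≤ ENNReal.ofReal (Real.exp ε) * M A S + ENNReal.ofReal δ ∧
      M A S ≤ ENNReal.ofReal (Real.exp ε) * M (insert x A) S + ENNReal.ofReal δ)
    -- the subsampled mechanism: sample each record independently with prob. q,
    -- then run M on the sample
    (Msub : Finset X → Measure Ω)
    (hMsub : ∀ D : Finset X, Msub D =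
      ∑ S ∈ D.powerset,
        (ENNReal.ofReal (q ^ S.card * (1 - q) ^ (D.card - S.card))) • M S) :
    ∀ (D : Finset X) (x : X), x ∉ D → ∀ S : Set Ω, MeasurableSet S →
      (Msub (insert x D) S ≤
          ENNReal.ofReal (Real.exp (Real.log (1 + q * (Real.exp ε - 1)))) * Msub D S +
            ENNReal.ofReal (q * δ) ∧
        Msub D S ≤
          ENNReal.ofReal (Real.exp (Real.log (1 + q * (Real.exp ε - 1)))) * Msub (insert x D) S +
            ENNReal.ofReal (q * δ)) ∧
      (ε ≤ 1 →
        Msub (insert x D) S ≤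
            ENNReal.ofReal (Real.exp (2 * q * ε)) * Msub D S + ENNReal.ofReal (q * δ) ∧
          Msub D S ≤
            ENNReal.ofReal (Real.exp (2 * q * ε)) * Msub (insert x D) S + ENNReal.ofReal (q * δ)) := by
  obtain rfl : Msub = subsample q M := funext hMsub
  intro D x hx S hS
  have ha : 1 ≤ Real.exp ε := Real.one_le_exp hε.le
  have hDP_add : subsample q (M ∘ insert x) D S ≤
      ENNReal.ofReal (Real.exp ε) * subsample q M D S + ENNReal.ofReal δ :=
    subsample_apply_le_mul_add hq0.le hq1.le fun A hA => (hM A x (fun h => hx (hA h)) S hS).1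
  have hDP_remove : subsample q M D S ≤
      ENNReal.ofReal (Real.exp ε) * subsample q (M ∘ insert x) D S + ENNReal.ofReal δ :=
    subsample_apply_le_mul_add hq0.le hq1.le fun A hA => (hM A x (fun h => hx (hA h)) S hS).2
  have hc₀ : 0 < 1 + q * (Real.exp ε - 1) := by nlinarith
  simp only [subsample_insert hq0.le hq1.le M hx, Measure.add_apply, Measure.smul_apply,
    smul_eq_mul, ENNReal.ofReal_mul hq0.le, Real.exp_log hc₀]
  have h₁ := ofReal_one_sub_mul_add_ofReal_mul_le (by linarith) hq0.le hq1.le hDP_add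
  have h₂ := le_ofReal_mul_ofReal_one_sub_mul_add_ofReal_mul ha hq0.le hq1.le hDP_remove
  have hc := one_add_mul_exp_sub_one_le_exp_two_mul hq0.le hε.le
  exact ⟨⟨h₁, h₂⟩, fun hε₁ =>
    ⟨h₁.trans (by gcongr; exact hc hε₁), h₂.trans (by gcongr; exact hc hε₁)⟩⟩

/-- Privacy amplification by subsampling: if a mechanism `M` is (ε, δ)-DP with
respect to its input lot, and the subsampled mechanism `Msub` first includes
each record of the dataset independently with probability `q = L/N` and then
applies `M` to the sampled lot, then `Msub` is
(log(1 + q(e^ε − 1)), qδ)-DP with respect to the full dataset; in particular,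
for ε ≤ 1 it is (2qε, qδ)-DP. -/
theorem privacy_amplification_by_subsampling
    {X : Type*} {Ω : Type*} [MeasurableSpace Ω] [DecidableEq X]
    (M : Finset X → Measure Ω) [∀ A, IsProbabilityMeasure (M A)]
    (ε δ q : ℝ) (hε : 0 < ε) (hδ : 0 ≤ δ)
    (L N : ℕ) (hN : 0 < N) (hL : L ≤ N) (hq : q = (L : ℝ) / N)
    (hq0 : 0 < q) (hq1 : q < 1)
    -- M is (ε, δ)-DP with respect to add/remove-one adjacency of the lot
    (hM : ∀ (A : Finset X) (x : X), x ∉ A → ∀ S : Set Ω, MeasurableSet S →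
      M (insert x A) S ≤ ENNReal.ofReal (Real.exp ε) * M A S + ENNReal.ofReal δ ∧
      M A S ≤ ENNReal.ofReal (Real.exp ε) * M (insert x A) S + ENNReal.ofReal δ)
    -- the subsampled mechanism: sample each record independently with prob. q,
    -- then run M on the sample
    (Msub : Finset X → Measure Ω)
    (hMsub : ∀ D : Finset X, Msub D =
      ∑ S ∈ D.powerset,
        (ENNReal.ofReal (q ^ S.card * (1 - q) ^ (D.card - S.card))) • M S) :
    ∀ (D : Finset X) (x : X), x ∉ D → ∀ S : Set Ω, MeasurableSet S →
      (Msub (insert x D) S ≤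
          ENNReal.ofReal (Real.exp (Real.log (1 + q * (Real.exp ε - 1)))) * Msub D S +
            ENNReal.ofReal (q * δ) ∧
        Msub D S ≤
          ENNReal.ofReal (Real.exp (Real.log (1 + q * (Real.exp ε - 1)))) * Msub (insert x D) S +
            ENNReal.ofReal (q * δ)) ∧
      (ε ≤ 1 →
        Msub (insert x D) S ≤
            ENNReal.ofReal (Real.exp (2 * q * ε)) * Msub D S + ENNReal.ofReal (q * δ) ∧
          Msub D S ≤
            ENNReal.ofReal (Real.exp (2 * q * ε)) * Msub (insert x D) S + ENNReal.ofReal (q * δ)) :=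
  privacy_amplification_by_subsampling_general M ε δ q hε hq0 hq1 hM Msub hMsub
end
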